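/- Let n ≥ 3. Since A_n is characteristic in G_n, every automorphism of G_n induces an automorphism of W_n = G_n/A_n, giving a homomorphism π : Aut(G_n) → Aut(W_n). Then π is surjective and its kernel equals t(M*), the group of translation automorphisms of G_n; that is, there is a short exact sequence 1 → M* → Aut(G_n) → Aut(W_n) → 1 with the first map given by t. -/

import Mathlib

/-!
Conjugation acts on each `x_j²` through a sign character, so elements of `A_n` have finite
conjugacy classes; `W_n` is the free product of `n ≥ 3` copies of `C₂`, where reduced words show
that every nontrivial element has an infinite conjugacy class. Hence `A_n` is the set of elements
with finite conjugacy class, it is characteristic, and `π` exists.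

An automorphism in `ker π` moves each `x_i` within `x_i A_n`, so it agrees with a translation `t_𝔞`.
Exponents in `A_n` are unique (read them off in the infinite dihedral group), translations compose
by the product of `M`, and so `𝔞` is a unit.

For surjectivity, an automorphism `β` of `W_n` sends each `x̄_i` to an involution, which in a free
product is conjugate to a generator `x̄_{σ i}`, and `σ` is a permutation. Lifting the conjugators
gives elements `g_i x_{σ i} g_i⁻¹` of `G_n` satisfying its defining relations; the resulting
endomorphism covers `β` and its image contains `A_n`. Composed with a lift of `β⁻¹` it becomes a
translation, hence injective, so it is an automorphism.
-/

def HWrels (n : ℕ) : Set (FreeGroup (Fin n)) :=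
  {r | ∃ i j : Fin n, i ≠ j ∧
    r = (FreeGroup.of i)⁻¹ * FreeGroup.of j ^ 2 * FreeGroup.of i * FreeGroup.of j ^ 2}

abbrev HW (n : ℕ) : Type := PresentedGroup (HWrels n)

def x (n : ℕ) (i : Fin n) : HW n := PresentedGroup.of i

def A (n : ℕ) : Subgroup (HW n) := Subgroup.closure (Set.range fun i => x n i ^ 2)

theorem HW.relation (n : ℕ) {i j : Fin n} (h : i ≠ j) :
    (x n i)⁻¹ * x n j ^ 2 * x n i * x n j ^ 2 = 1 := by
  have hr : ((FreeGroup.of i)⁻¹ * FreeGroup.of j ^ 2 * FreeGroup.of i * FreeGroup.of j ^ 2)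
      ∈ HWrels n := ⟨i, j, h, rfl⟩
  have h2 : PresentedGroup.mk (HWrels n)
      ((FreeGroup.of i)⁻¹ * FreeGroup.of j ^ 2 * FreeGroup.of i * FreeGroup.of j ^ 2) = 1 :=
    (QuotientGroup.eq_one_iff _).mpr (Subgroup.subset_normalClosure hr)
  rw [map_mul, map_mul, map_mul, map_inv, map_pow] at h2
  exact h2

theorem HW.conj_sq_mem (n : ℕ) (k j : Fin n) :
    x n k * x n j ^ 2 * (x n k)⁻¹ ∈ A n ∧ (x n k)⁻¹ * x n j ^ 2 * x n k ∈ A n := by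
  have hj : x n j ^ 2 ∈ A n := Subgroup.subset_closure ⟨j, rfl⟩
  by_cases h : k = j
  · subst h
    have e1 : x n k * x n k ^ 2 * (x n k)⁻¹ = x n k ^ 2 := by group
    have e2 : (x n k)⁻¹ * x n k ^ 2 * x n k = x n k ^ 2 := by group
    rw [e1, e2]; exact ⟨hj, hj⟩
  · have hrel := HW.relation n h
    have e2 : (x n k)⁻¹ * x n j ^ 2 * x n k = (x n j ^ 2)⁻¹ :=
      mul_eq_one_iff_eq_inv.mp hrel
    have h3 : x n j ^ 2 = x n k * (x n j ^ 2)⁻¹ * (x n k)⁻¹ := by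
      rw [← e2]; group
    have e1 : x n k * x n j ^ 2 * (x n k)⁻¹ = (x n j ^ 2)⁻¹ := by
      calc x n k * x n j ^ 2 * (x n k)⁻¹
          = (x n k * (x n j ^ 2)⁻¹ * (x n k)⁻¹)⁻¹ := by group
        _ = (x n j ^ 2)⁻¹ := by rw [← h3]
    rw [e1, e2]
    exact ⟨Subgroup.inv_mem _ hj, Subgroup.inv_mem _ hj⟩

instance A_normal (n : ℕ) : (A n).Normal := by
  let K : Subgroup (HW n) :=
    { carrier := {g | (∀ a ∈ A n, g * a * g⁻¹ ∈ A n) ∧ (∀ a ∈ A n, g⁻¹ * a * g ∈ A n)}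
      one_mem' := by simp
      mul_mem' := by
        rintro g h ⟨hg1, hg2⟩ ⟨hh1, hh2⟩
        constructor
        · intro a ha
          have := hg1 _ (hh1 a ha)
          have e : g * (h * a * h⁻¹) * g⁻¹ = g * h * a * (g * h)⁻¹ := by group
          rwa [e] at this
        · intro a ha
          have := hh2 _ (hg2 a ha)
          have e : h⁻¹ * (g⁻¹ * a * g) * h = (g * h)⁻¹ * a * (g * h) := by group
          rwa [e] at this
      inv_mem' := by
        rintro g ⟨hg1, hg2⟩
        constructor
        · intro a ha
          have := hg2 a ha
          have e : g⁻¹ * a * g = g⁻¹ * a * g⁻¹⁻¹ := by group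
          rwa [e] at this
        · intro a ha
          have := hg1 a ha
          have e : g * a * g⁻¹ = g⁻¹⁻¹ * a * g⁻¹ := by group
          rwa [e] at this }
  have hgen : ∀ j : Fin n, PresentedGroup.of (rels := HWrels n) j ∈ K := by
    intro j
    show (∀ a ∈ A n, x n j * a * (x n j)⁻¹ ∈ A n) ∧ (∀ a ∈ A n, (x n j)⁻¹ * a * x n j ∈ A n)
    constructor
    · intro a ha
      refine Subgroup.closure_induction ?_ ?_ ?_ ?_ ha
      · rintro b ⟨i, rfl⟩
        exact (HW.conj_sq_mem n j i).1
      · simpa using Subgroup.one_mem (A n)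
      · intro b c _ _ hb hc
        have e : x n j * (b * c) * (x n j)⁻¹
            = (x n j * b * (x n j)⁻¹) * (x n j * c * (x n j)⁻¹) := by group
        rw [e]; exact Subgroup.mul_mem _ hb hc
      · intro b _ hb
        have e : x n j * b⁻¹ * (x n j)⁻¹ = (x n j * b * (x n j)⁻¹)⁻¹ := by group
        rw [e]; exact Subgroup.inv_mem _ hb
    · intro a ha
      refine Subgroup.closure_induction ?_ ?_ ?_ ?_ ha
      · rintro b ⟨i, rfl⟩
        exact (HW.conj_sq_mem n j i).2
      · simpa using Subgroup.one_mem (A n)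
      · intro b c _ _ hb hc
        have e : (x n j)⁻¹ * (b * c) * x n j
            = ((x n j)⁻¹ * b * x n j) * ((x n j)⁻¹ * c * x n j) := by group
        rw [e]; exact Subgroup.mul_mem _ hb hc
      · intro b _ hb
        have e : (x n j)⁻¹ * b⁻¹ * x n j = ((x n j)⁻¹ * b * x n j)⁻¹ := by group
        rw [e]; exact Subgroup.inv_mem _ hb
  constructor
  intro a ha g
  exact ((PresentedGroup.generated_by (HWrels n) K hgen g).1) a ha

/-- A type synonym for `M = M_n(ℤ)`, carrying the monoid structure given by
`𝔞 * 𝔟 = [c_ij]` with `c_ij = a_ij + (1 + 2 a_jj) b_ij`. -/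
def MM (n : ℕ) : Type := Matrix (Fin n) (Fin n) ℤ

instance (n : ℕ) : Mul (MM n) :=
  ⟨fun 𝔞 𝔟 i j => 𝔞 i j + (1 + 2 * 𝔞 j j) * 𝔟 i j⟩

instance (n : ℕ) : One (MM n) := ⟨fun _ _ => (0 : ℤ)⟩

theorem MM.mul_apply {n : ℕ} (𝔞 𝔟 : MM n) (i j : Fin n) :
    (𝔞 * 𝔟) i j = 𝔞 i j + (1 + 2 * 𝔞 j j) * 𝔟 i j := rfl

theorem MM.one_apply {n : ℕ} (i j : Fin n) : (1 : MM n) i j = 0 := rfl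

theorem MM.ext {n : ℕ} {𝔞 𝔟 : MM n} (h : ∀ i j, 𝔞 i j = 𝔟 i j) : 𝔞 = 𝔟 :=
  funext fun i => funext fun j => h i j

instance (n : ℕ) : Monoid (MM n) where
  mul_assoc a b c := MM.ext fun i j => by
    simp only [MM.mul_apply]; ring
  one_mul a := MM.ext fun i j => by simp only [MM.mul_apply, MM.one_apply]; ring
  mul_one a := MM.ext fun i j => by simp only [MM.mul_apply, MM.one_apply]; ring

/-- For an `n × n` integer matrix `𝔞 = [a_ij]`, the element
`a_i = (x_1²)^{a_i1} ⋯ (x_n²)^{a_in}` of `A_n ≤ G_n`. -/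
def aElt (n : ℕ) (𝔞 : MM n) (i : Fin n) : HW n :=
  ((List.finRange n).map fun j => (x n j ^ 2) ^ 𝔞 i j).prod

/-- The quotient `W_n = G_n / A_n`. -/
abbrev Wq (n : ℕ) : Type := HW n ⧸ A n


theorem conjugatesOf_map_subset_image {G H : Type*} [Group G] [Group H] {f : G →* H}
    (hf : Function.Surjective f) (g : G) : conjugatesOf (f g) ⊆ f '' conjugatesOf g := by
  intro b hb
  obtain ⟨c, rfl⟩ := isConj_iff.mp hb
  obtain ⟨c, rfl⟩ := hf c
  exact ⟨c * g * c⁻¹, isConj_iff.mpr ⟨c, rfl⟩, by simp⟩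

section QuotientAut

variable {G : Type*} [Group G] (H : Subgroup G) [H.Characteristic]

def MulAut.quotient : MulAut G →* MulAut (G ⧸ H) where
  toFun φ := QuotientGroup.congr H H φ (Subgroup.characteristic_iff_map_eq.mp ‹_› φ)
  map_one' := MulEquiv.ext fun w => QuotientGroup.induction_on w fun _ => rfl
  map_mul' _ _ := MulEquiv.ext fun w => QuotientGroup.induction_on w fun _ => rfl

theorem MulAut.quotient_apply_mk (φ : MulAut G) (g : G) :
    MulAut.quotient H φ (g : G ⧸ H) = (φ g : G ⧸ H) := rfl

theorem MulAut.quotient_eq_one_iff (φ : MulAut G) :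
    MulAut.quotient H φ = 1 ↔ (QuotientGroup.mk' H).comp φ.toMonoidHom = QuotientGroup.mk' H :=
  ⟨fun h => MonoidHom.ext fun g => DFunLike.congr_fun h (g : G ⧸ H),
    fun h => MulEquiv.ext fun w => QuotientGroup.induction_on w (DFunLike.congr_fun h)⟩

end QuotientAut

theorem Fin.exists_ne_ne {n : ℕ} (hn : 3 ≤ n) (a b : Fin n) : ∃ c, c ≠ a ∧ c ≠ b := by
  have hcard : ({a, b} : Finset (Fin n)).card < (Finset.univ : Finset (Fin n)).card := by
    rw [Finset.card_univ, Fintype.card_fin]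
    exact Finset.card_le_two.trans_lt hn
  obtain ⟨c, -, hc⟩ := Finset.exists_mem_notMem_of_card_lt_card hcard
  exact ⟨c, by simpa [not_or] using hc⟩

abbrev C2 : Type := Multiplicative (ZMod 2)

namespace C2

def τ : C2 := Multiplicative.ofAdd 1

theorem eq_one_or_eq_τ (c : C2) : c = 1 ∨ c = τ := by
  revert c
  decide

theorem τ_ne_one : τ ≠ 1 := by decide

theorem τ_mul_τ : τ * τ = 1 := by decide

variable {H : Type*} [Group H]

def lift (h : H) (hh : h ^ 2 = 1) : C2 →* H where
  toFun c := h ^ (Multiplicative.toAdd c).val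
  map_one' := pow_zero h
  map_mul' a b := by
    rw [toAdd_mul, ZMod.val_add, ← pow_eq_pow_mod _ hh, pow_add]

theorem lift_τ (h : H) (hh : h ^ 2 = 1) : lift h hh τ = h := pow_one h

theorem hom_ext {f g : C2 →* H} (h : f τ = g τ) : f = g :=
  MonoidHom.ext fun c => by rcases eq_one_or_eq_τ c with rfl | rfl <;> simp [h]

end C2

/-- For `ι = Fin n` this is `W_n`, see `HW.quotEquivFreeC2`. -/
abbrev FreeC2 (ι : Type*) : Type _ := Monoid.CoprodI fun _ : ι => C2

namespace FreeC2

variable {ι : Type*}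

def gen (i : ι) : FreeC2 ι := Monoid.CoprodI.of (i := i) C2.τ

theorem gen_mul_self (i : ι) : gen i * gen i = 1 := by
  rw [gen, ← map_mul, C2.τ_mul_τ, map_one]

theorem gen_inv (i : ι) : (gen i)⁻¹ = gen i :=
  inv_eq_of_mul_eq_one_right (gen_mul_self i)

def ofList (l : List ι) : FreeC2 ι := (l.map gen).prod

@[simp]
theorem ofList_nil : ofList ([] : List ι) = 1 := rfl

@[simp]
theorem ofList_cons (i : ι) (l : List ι) : ofList (i :: l) = gen i * ofList l := by
  simp [ofList]

@[simp]
theorem ofList_append (l l' : List ι) : ofList (l ++ l') = ofList l * ofList l' := by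
  simp [ofList]

@[simp]
theorem ofList_reverse (l : List ι) : ofList l.reverse = (ofList l)⁻¹ := by
  induction l with
  | nil => simp
  | cons i l ih => simp [ih, gen_inv]

/-- A list without two equal adjacent letters spells a reduced word of the free product. -/
def toWord (l : List ι) (hl : l.IsChain (· ≠ ·)) : Monoid.CoprodI.Word fun _ : ι => C2 where
  toList := l.map fun i => ⟨i, C2.τ⟩
  ne_one _ hs := by
    obtain ⟨i, -, rfl⟩ := List.mem_map.mp hs
    exact C2.τ_ne_one
  chain_ne := (List.isChain_map _).mpr hl

theorem prod_toWord (l : List ι) (hl : l.IsChain (· ≠ ·)) : (toWord l hl).prod = ofList l := by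
  simp only [Monoid.CoprodI.Word.prod, toWord, ofList, List.map_map]
  rfl

def alternating (a b : ι) : ℕ → List ι
  | 0 => []
  | m + 1 => a :: b :: alternating a b m

theorem length_alternating (a b : ι) (m : ℕ) : (alternating a b m).length = 2 * m := by
  induction m with
  | zero => rfl
  | succ m ih => simp only [alternating, List.length_cons, ih]; ring

theorem isChain_alternating_append {a b : ι} (hab : a ≠ b) {l : List ι}
    (hl : l.IsChain (· ≠ ·)) (hb : ∀ c ∈ l.head?, b ≠ c) (m : ℕ) :
    (alternating a b m ++ l).IsChain (· ≠ ·) := by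
  suffices h : (alternating a b m ++ l).IsChain (· ≠ ·) ∧
      ∀ c ∈ (alternating a b m ++ l).head?, b ≠ c from h.1
  induction m with
  | zero => exact ⟨hl, hb⟩
  | succ m ih =>
    refine ⟨List.isChain_cons_cons.mpr ⟨hab, List.isChain_cons.mpr ⟨ih.2, ih.1⟩⟩, ?_⟩
    simpa [alternating] using hab.symm

variable [DecidableEq ι]

theorem ofList_inj {l l' : List ι} (hl : l.IsChain (· ≠ ·)) (hl' : l'.IsChain (· ≠ ·)) :
    ofList l = ofList l' ↔ l = l' := by
  refine ⟨fun h => ?_, congrArg ofList⟩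
  have hw : toWord l hl = toWord l' hl' :=
    Monoid.CoprodI.Word.equiv.symm.injective (by
      change (toWord l hl).prod = (toWord l' hl').prod
      rw [prod_toWord, prod_toWord, h])
  simpa [toWord, Function.comp_def] using congrArg (fun w => w.toList.map Sigma.fst) hw

theorem exists_isChain_ofList_eq (p : FreeC2 ι) :
    ∃ l : List ι, l.IsChain (· ≠ ·) ∧ ofList l = p := by
  set w := Monoid.CoprodI.Word.equiv p
  have hτ : ∀ s ∈ w.toList, s.2 = C2.τ := fun s hs =>
    (C2.eq_one_or_eq_τ s.2).resolve_left (w.ne_one s hs)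
  refine ⟨w.toList.map Sigma.fst, (List.isChain_map _).mpr w.chain_ne, ?_⟩
  calc ofList (w.toList.map Sigma.fst) = w.prod := by
        simp only [ofList, Monoid.CoprodI.Word.prod, List.map_map]
        exact congrArg List.prod (List.map_congr_left fun s hs => by simp [gen, hτ s hs])
    _ = p := Monoid.CoprodI.Word.equiv.symm_apply_apply p

theorem infinite_conjugatesOf (h3 : ∀ a b : ι, ∃ c, c ≠ a ∧ c ≠ b) {p : FreeC2 ι} (hp : p ≠ 1) :
    (conjugatesOf p).Infinite := by
  obtain ⟨l, hl, rfl⟩ := exists_isChain_ofList_eq p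
  have hne : l ≠ [] := by rintro rfl; exact hp rfl
  obtain ⟨b, hbh, hbl⟩ := h3 (l.head hne) (l.getLast hne)
  obtain ⟨a, hab, -⟩ := h3 b b
  -- conjugating by `(ab)^m` creates no cancellation, so the conjugates have length `4m + |l|`
  let L m := alternating a b m ++ (l ++ (alternating a b m).reverse)
  have hL : ∀ m, (L m).IsChain (· ≠ ·) := fun m => by
    refine isChain_alternating_append hab ?_ (by
      simpa [List.head?_append_of_ne_nil _ hne, List.head?_eq_some_head hne] using hbh) m
    rw [← List.reverse_reverse l, ← List.reverse_append, List.isChain_reverse]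
    refine (isChain_alternating_append hab (List.isChain_reverse.mpr ?_) ?_ m).imp
      fun _ _ h => h.symm
    · exact hl.imp fun _ _ h => h.symm
    · simpa [List.head?_reverse, List.getLast?_eq_some_getLast hne] using hbl
  refine Set.infinite_of_injective_forall_mem (f := fun m => ofList (L m)) (fun m m' h => ?_)
    fun m => isConj_iff.mpr ⟨ofList (alternating a b m), by simp [L, mul_assoc]⟩
  have hlen := congrArg List.length ((ofList_inj (hL m) (hL m')).mp h)
  simp only [L, List.length_append, List.length_reverse, length_alternating] at hlen
  omega

theorem exists_conj_gen_of_ofList_sq_eq_one :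
    ∀ {l : List ι}, l.IsChain (· ≠ ·) → ofList l ≠ 1 → ofList l ^ 2 = 1 →
      ∃ q i, ofList l = q * gen i * q⁻¹
  | [], _, hne, _ => absurd rfl hne
  | [c], _, _, _ => ⟨1, c, by simp⟩
  | c :: d :: t, hl, hne, hsq => by
    obtain ⟨mid, e, hmid⟩ : ∃ mid e, d :: t = mid ++ [e] :=
      ((List.eq_nil_or_concat (d :: t)).resolve_left (List.cons_ne_nil d t)).imp
        fun _ => Exists.imp fun _ h => h.trans List.concat_eq_append
    rw [hmid] at hl hne hsq ⊢
    have hce : c = e := by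
      by_contra hce
      -- otherwise `l ++ l` would be a nonempty reduced word spelling `1`
      have hll : ((c :: (mid ++ [e])) ++ (c :: (mid ++ [e]))).IsChain (· ≠ ·) :=
        List.isChain_append.mpr ⟨hl, hl, by
          rw [← List.cons_append, List.getLast?_concat]
          simpa using Ne.symm hce⟩
      have := (ofList_inj hll List.isChain_nil).mp (by rw [ofList_append, ← sq, hsq]; rfl)
      simp at this
    subst hce
    have hconj : ofList (c :: (mid ++ [c])) = gen c * ofList mid * (gen c)⁻¹ := by
      simp [gen_inv, mul_assoc]
    have hmid_chain : mid.IsChain (· ≠ ·) := hl.infix ⟨[c], [c], rfl⟩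
    rw [hconj] at hne hsq ⊢
    rw [conj_pow, conj_eq_one_iff] at hsq
    obtain ⟨q, i, hq⟩ := exists_conj_gen_of_ofList_sq_eq_one hmid_chain
      (fun h => hne (conj_eq_one_iff.mpr h)) hsq
    exact ⟨gen c * q, i, by rw [hq]; group⟩
termination_by l => l.length
decreasing_by
  have := congrArg List.length hmid
  simp only [List.length_cons, List.length_append] at this ⊢
  omega

theorem exists_conj_gen_of_sq_eq_one {p : FreeC2 ι} (hp : p ≠ 1) (hp2 : p ^ 2 = 1) :
    ∃ q i, p = q * gen i * q⁻¹ := by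
  obtain ⟨l, hl, rfl⟩ := exists_isChain_ofList_eq p
  exact exists_conj_gen_of_ofList_sq_eq_one hl hp hp2

end FreeC2

namespace HW

variable {n : ℕ}

section Characters

def unitsChar (f : Fin n → ℤˣ) : HW n →* ℤˣ :=
  PresentedGroup.toGroup (f := f) (by
    rintro _ ⟨i, j, -, rfl⟩
    simp [Int.units_sq])

@[simp]
theorem unitsChar_x (f : Fin n → ℤˣ) (i : Fin n) : unitsChar f (x n i) = f i :=
  PresentedGroup.toGroup.of _

theorem A_le_ker_unitsChar (f : Fin n → ℤˣ) : A n ≤ (unitsChar f).ker := by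
  rw [A, Subgroup.closure_le]
  rintro _ ⟨i, rfl⟩
  simp [Int.units_sq]

def sign (k : Fin n) : HW n →* ℤˣ := unitsChar fun i => if i = k then 1 else -1

theorem sign_x (k i : Fin n) : sign k (x n i) = if i = k then 1 else -1 :=
  unitsChar_x _ i

theorem inv_x_mul_x_sq_mul_x {i j : Fin n} (hij : i ≠ j) :
    (x n i)⁻¹ * x n j ^ 2 * x n i = (x n j ^ 2)⁻¹ :=
  mul_eq_one_iff_eq_inv.mp (HW.relation n hij)

theorem x_mul_x_sq_mul_inv_x {i j : Fin n} (hij : i ≠ j) :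
    x n i * x n j ^ 2 * (x n i)⁻¹ = (x n j ^ 2)⁻¹ := by
  rw [← inv_inj, inv_inv, conj_inv, ← inv_x_mul_x_sq_mul_x hij]
  group

theorem conj_x_sq (h : HW n) (j : Fin n) :
    h * x n j ^ 2 * h⁻¹ = (x n j ^ 2) ^ (sign j h : ℤ) := by
  have hh : h ∈ Subgroup.closure (Set.range (PresentedGroup.of : Fin n → HW n)) := by
    simp
  induction hh using Subgroup.closure_induction'' with
  | mem _ hg =>
    obtain ⟨i, rfl⟩ := hg
    change x n i * x n j ^ 2 * (x n i)⁻¹ = (x n j ^ 2) ^ (sign j (x n i) : ℤ)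
    rw [sign_x]
    split_ifs with hij
    · subst hij; rw [Units.val_one, zpow_one]; group
    · simp [x_mul_x_sq_mul_inv_x hij]
  | inv_mem _ hg =>
    obtain ⟨i, rfl⟩ := hg
    change (x n i)⁻¹ * x n j ^ 2 * (x n i)⁻¹⁻¹ = (x n j ^ 2) ^ (sign j (x n i)⁻¹ : ℤ)
    rw [map_inv, Int.units_inv_eq_self, sign_x, inv_inv]
    split_ifs with hij
    · subst hij; rw [Units.val_one, zpow_one]; group
    · simp [inv_x_mul_x_sq_mul_x hij]
  | one => simp
  | mul g h _ _ ihg ihh =>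
    calc g * h * x n j ^ 2 * (g * h)⁻¹ = g * (h * x n j ^ 2 * h⁻¹) * g⁻¹ := by group
      _ = (g * x n j ^ 2 * g⁻¹) ^ (sign j h : ℤ) := by rw [ihh, conj_zpow]
      _ = _ := by rw [ihg, ← zpow_mul, map_mul, Units.val_mul]

theorem inv_conj_x_sq (h : HW n) (j : Fin n) :
    h⁻¹ * x n j ^ 2 * h = (x n j ^ 2) ^ (sign j h : ℤ) := by
  simpa [Int.units_inv_eq_self] using conj_x_sq h⁻¹ j

theorem commute_x_sq (i j : Fin n) : Commute (x n i ^ 2) (x n j ^ 2) := by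
  have h := conj_x_sq (x n i ^ 2) j
  rw [map_pow, Int.units_sq, Units.val_one, zpow_one, mul_inv_eq_iff_eq_mul] at h
  exact h

end Characters

section SquareProducts

def sqProd (v : Fin n → ℤ) : HW n :=
  ((List.finRange n).map fun j => (x n j ^ 2) ^ v j).prod

theorem aElt_eq_sqProd (𝔞 : MM n) (i : Fin n) : aElt n 𝔞 i = sqProd (𝔞 i) := rfl

theorem sqProd_add (v w : Fin n → ℤ) : sqProd (v + w) = sqProd v * sqProd w := by
  unfold sqProd
  induction (List.finRange n) with
  | nil => simp
  | cons a l ih =>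
    have hc : Commute ((x n a ^ 2) ^ w a) (l.map fun j => (x n j ^ 2) ^ v j).prod :=
      Commute.list_prod_right _ _ fun y hy => by
        obtain ⟨j, -, rfl⟩ := List.mem_map.mp hy
        exact (commute_x_sq a j).zpow_zpow _ _
    rw [List.map_cons, List.map_cons, List.map_cons, List.prod_cons, List.prod_cons,
      List.prod_cons, ih, Pi.add_apply, zpow_add]
    exact hc.mul_mul_mul_comm _ _

@[simp]
theorem sqProd_zero : sqProd (0 : Fin n → ℤ) = 1 := by
  simp [sqProd]

theorem sqProd_neg (v : Fin n → ℤ) : sqProd (-v) = (sqProd v)⁻¹ :=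
  eq_inv_of_mul_eq_one_left (by rw [← sqProd_add, neg_add_cancel, sqProd_zero])

theorem sqProd_single (j : Fin n) (c : ℤ) : sqProd (Pi.single j c) = (x n j ^ 2) ^ c := by
  rw [sqProd, List.prod_map_eq_pow_single j _ fun k hk _ => by simp [hk],
    List.count_eq_one_of_mem (List.nodup_finRange n) (List.mem_finRange j)]
  simp

theorem mem_A_iff {a : HW n} : a ∈ A n ↔ ∃ v, sqProd v = a := by
  refine ⟨fun ha => ?_, ?_⟩
  · induction ha using Subgroup.closure_induction with
    | mem _ hb =>
      obtain ⟨j, rfl⟩ := hb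
      exact ⟨Pi.single j 1, by rw [sqProd_single, zpow_one]⟩
    | one => exact ⟨0, sqProd_zero⟩
    | mul _ _ _ _ hb hc =>
      obtain ⟨v, rfl⟩ := hb
      obtain ⟨w, rfl⟩ := hc
      exact ⟨v + w, sqProd_add v w⟩
    | inv _ _ hb =>
      obtain ⟨v, rfl⟩ := hb
      exact ⟨-v, sqProd_neg v⟩
  · rintro ⟨v, rfl⟩
    refine Subgroup.list_prod_mem _ fun y hy => ?_
    obtain ⟨j, -, rfl⟩ := List.mem_map.mp hy
    exact Subgroup.zpow_mem _ (Subgroup.subset_closure (Set.mem_range_self j)) _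

theorem sqProd_mem_A (v : Fin n → ℤ) : sqProd v ∈ A n := mem_A_iff.mpr ⟨v, rfl⟩

theorem conj_sqProd (h : HW n) (v : Fin n → ℤ) :
    h * sqProd v * h⁻¹ = sqProd fun k => (sign k h : ℤ) * v k := by
  change MulAut.conj h (sqProd v) = _
  rw [sqProd, map_list_prod, List.map_map]
  congr 1
  refine List.map_congr_left fun k _ => ?_
  rw [Function.comp_apply, map_zpow, MulAut.conj_apply, conj_x_sq, ← zpow_mul]

theorem inv_conj_sqProd (h : HW n) (v : Fin n → ℤ) :
    h⁻¹ * sqProd v * h = sqProd fun k => (sign k h : ℤ) * v k := by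
  simpa [Int.units_inv_eq_self] using conj_sqProd h⁻¹ v

end SquareProducts

section Dihedral

open DihedralGroup

/-- Reads off the `k`-th exponent of a product of squares, see `toDihedral_sqProd`. -/
def toDihedral (k : Fin n) : HW n →* DihedralGroup 0 :=
  PresentedGroup.toGroup (f := fun i => if i = k then r 1 else sr 0) (by
    rintro _ ⟨i, j, hij, rfl⟩
    simp only [map_mul, map_inv, map_pow, FreeGroup.lift_apply_of]
    split_ifs with hi hj hj <;> simp_all [sq])

theorem toDihedral_x_sq (k i : Fin n) : toDihedral k (x n i ^ 2) = if i = k then r 2 else 1 := by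
  simp only [toDihedral, x, map_pow, PresentedGroup.toGroup.of]
  split_ifs <;> simp [sq, one_add_one_eq_two]

theorem toDihedral_sqProd (k : Fin n) (v : Fin n → ℤ) :
    toDihedral k (sqProd v) = r ((2 * v k : ℤ) : ZMod 0) := by
  rw [sqProd, map_list_prod, List.map_map,
    List.prod_map_eq_pow_single k _ fun j hj _ => by simp [toDihedral_x_sq, hj],
    List.count_eq_one_of_mem (List.nodup_finRange n) (List.mem_finRange k)]
  simp [toDihedral_x_sq, r_zpow, mul_comm]
  rfl

end Dihedral

theorem sqProd_injective : Function.Injective (sqProd (n := n)) := fun v w h => funext fun k => by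
  have hk := congrArg (toDihedral k) h
  rw [toDihedral_sqProd, toDihedral_sqProd] at hk
  have : 2 * v k = 2 * w k := Int.cast_injective (α := ZMod 0) (DihedralGroup.r.inj hk)
  omega

theorem sqProd_eq_one_iff {v : Fin n → ℤ} : sqProd v = 1 ↔ v = 0 := by
  rw [← sqProd_zero, sqProd_injective.eq_iff]

section Translations

/-- `φ` agrees on the generators with the translation endomorphism `t_𝔞 : x_i ↦ x_i a_i`. -/
def IsTranslation (𝔞 : MM n) (φ : HW n →* HW n) : Prop :=
  ∀ i, φ (x n i) = x n i * aElt n 𝔞 i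

theorem x_mul_sqProd_sq (j : Fin n) (v : Fin n → ℤ) :
    (x n j * sqProd v) ^ 2 = (x n j ^ 2) ^ (1 + 2 * v j) := by
  have hexp : (fun k => (sign k (x n j) : ℤ) * v k) + v = Pi.single j (2 * v j) := by
    funext k
    by_cases hk : k = j
    · subst hk
      simp [sign_x]
      ring
    · simp [sign_x, Ne.symm hk, hk]
  calc (x n j * sqProd v) ^ 2 = x n j ^ 2 * ((x n j)⁻¹ * sqProd v * x n j * sqProd v) := by
        rw [sq]; group
    _ = _ := by rw [inv_conj_sqProd, ← sqProd_add, hexp, sqProd_single, zpow_add, zpow_one]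

variable {𝔞 𝔟 : MM n} {φ ψ : HW n →* HW n}

theorem IsTranslation.map_sqProd (h : IsTranslation 𝔞 φ) (w : Fin n → ℤ) :
    φ (sqProd w) = sqProd fun j => (1 + 2 * 𝔞 j j) * w j := by
  rw [sqProd, map_list_prod, List.map_map]
  congr 1
  refine List.map_congr_left fun j _ => ?_
  rw [Function.comp_apply, map_zpow, map_pow, h j, aElt_eq_sqProd, x_mul_sqProd_sq, ← zpow_mul]

theorem IsTranslation.comp (hφ : IsTranslation 𝔞 φ) (hψ : IsTranslation 𝔟 ψ) :
    IsTranslation (𝔞 * 𝔟) (φ.comp ψ) := fun i => by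
  rw [MonoidHom.comp_apply, hψ i, map_mul, hφ i, aElt_eq_sqProd 𝔟, hφ.map_sqProd, mul_assoc,
    aElt_eq_sqProd 𝔞, ← sqProd_add]
  rfl

theorem eq_one_of_isTranslation_id (h : IsTranslation 𝔞 (MonoidHom.id _)) : 𝔞 = 1 :=
  MM.ext fun i j => by
    have hi := h i
    rw [MonoidHom.id_apply, left_eq_mul, aElt_eq_sqProd, sqProd_eq_one_iff] at hi
    exact congrFun hi j

theorem IsTranslation.isUnit (hφ : IsTranslation 𝔞 φ) (hψ : IsTranslation 𝔟 ψ)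
    (hφψ : φ.comp ψ = MonoidHom.id _) (hψφ : ψ.comp φ = MonoidHom.id _) : IsUnit 𝔞 :=
  ⟨⟨𝔞, 𝔟, eq_one_of_isTranslation_id (hφψ ▸ hφ.comp hψ),
    eq_one_of_isTranslation_id (hψφ ▸ hψ.comp hφ)⟩, rfl⟩

theorem exists_isTranslation_iff :
    (∃ 𝔞, IsTranslation 𝔞 φ) ↔ (QuotientGroup.mk' (A n)).comp φ = QuotientGroup.mk' (A n) := by
  constructor
  · rintro ⟨𝔞, h⟩
    refine PresentedGroup.ext fun i => ?_
    change QuotientGroup.mk (φ (x n i)) = (QuotientGroup.mk (x n i) : Wq n)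
    rw [h i, aElt_eq_sqProd, QuotientGroup.mk_mul,
      (QuotientGroup.eq_one_iff _).mpr (sqProd_mem_A _), mul_one]
  · intro h
    have hA : ∀ i, (x n i)⁻¹ * φ (x n i) ∈ A n := fun i =>
      QuotientGroup.eq.mp (DFunLike.congr_fun h (x n i)).symm
    choose v hv using fun i => mem_A_iff.mp (hA i)
    refine ⟨v, fun i => ?_⟩
    change φ (x n i) = x n i * sqProd (v i)
    rw [hv i, mul_inv_cancel_left]

theorem IsTranslation.injective (h : IsTranslation 𝔞 φ) : Function.Injective φ := by
  rw [injective_iff_map_eq_one]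
  intro g hg
  have hgA : g ∈ A n := by
    have hmk := DFunLike.congr_fun (exists_isTranslation_iff.mp ⟨𝔞, h⟩) g
    rw [MonoidHom.comp_apply, hg, map_one, eq_comm, QuotientGroup.mk'_apply,
      QuotientGroup.eq_one_iff] at hmk
    exact hmk
  obtain ⟨w, rfl⟩ := mem_A_iff.mp hgA
  rw [h.map_sqProd, sqProd_eq_one_iff] at hg
  rw [sqProd_eq_one_iff]
  funext j
  have hj := congrFun hg j
  simp only [Pi.zero_apply, mul_eq_zero] at hj ⊢
  omega

end Translations

section FreeProduct

open FreeC2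

def toFreeC2 : HW n →* FreeC2 (Fin n) :=
  PresentedGroup.toGroup (f := gen) (by
    rintro _ ⟨i, j, -, rfl⟩
    simp [sq, gen_mul_self])

theorem toFreeC2_x (i : Fin n) : toFreeC2 (x n i) = gen i := PresentedGroup.toGroup.of _

theorem A_le_ker_toFreeC2 : A n ≤ (toFreeC2 (n := n)).ker := by
  rw [A, Subgroup.closure_le]
  rintro _ ⟨i, rfl⟩
  simp [sq, toFreeC2_x, gen_mul_self]

theorem mk_x_sq (i : Fin n) : (x n i : Wq n) ^ 2 = 1 :=
  (QuotientGroup.eq_one_iff _).mpr (Subgroup.subset_closure (Set.mem_range_self i))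

def ofFreeC2 : FreeC2 (Fin n) →* Wq n :=
  Monoid.CoprodI.lift fun i => C2.lift (x n i : Wq n) (mk_x_sq i)

theorem ofFreeC2_gen (i : Fin n) : ofFreeC2 (gen i) = (x n i : Wq n) := by
  rw [ofFreeC2, gen, Monoid.CoprodI.lift_of, C2.lift_τ]

variable (n) in
def quotEquivFreeC2 : Wq n ≃* FreeC2 (Fin n) where
  toFun := QuotientGroup.lift (A n) toFreeC2 A_le_ker_toFreeC2
  invFun := ofFreeC2
  left_inv w := by
    have h : ofFreeC2.comp toFreeC2 = QuotientGroup.mk' (A n) := PresentedGroup.ext fun i => by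
      change ofFreeC2 (toFreeC2 (x n i)) = (x n i : Wq n)
      rw [toFreeC2_x, ofFreeC2_gen]
    induction w using QuotientGroup.induction_on with
    | H g => exact DFunLike.congr_fun h g
  right_inv p := by
    have h : (QuotientGroup.lift (A n) toFreeC2 A_le_ker_toFreeC2).comp ofFreeC2 =
        MonoidHom.id _ := Monoid.CoprodI.ext_hom _ _ fun i => C2.hom_ext <| by
      change QuotientGroup.lift (A n) toFreeC2 A_le_ker_toFreeC2 (ofFreeC2 (gen i)) = gen i
      rw [ofFreeC2_gen, QuotientGroup.lift_mk, toFreeC2_x]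
    exact DFunLike.congr_fun h p
  map_mul' := map_mul _

theorem quotEquivFreeC2_mk (g : HW n) : quotEquivFreeC2 n g = toFreeC2 g := rfl

theorem quotEquivFreeC2_symm_gen (i : Fin n) : (quotEquivFreeC2 n).symm (gen i) = x n i :=
  ofFreeC2_gen i

theorem finite_conjugatesOf_sqProd (v : Fin n → ℤ) : (conjugatesOf (sqProd v)).Finite := by
  refine (Set.finite_range fun s : Fin n → ℤˣ => sqProd fun k => (s k : ℤ) * v k).subset ?_
  intro _ hb
  obtain ⟨h, rfl⟩ := isConj_iff.mp hb
  exact ⟨fun k => sign k h, (conj_sqProd h v).symm⟩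

theorem mem_A_iff_finite_conjugatesOf (hn : 3 ≤ n) {g : HW n} :
    g ∈ A n ↔ (conjugatesOf g).Finite := by
  refine ⟨fun hg => ?_, fun hfin => ?_⟩
  · obtain ⟨v, rfl⟩ := mem_A_iff.mp hg
    exact finite_conjugatesOf_sqProd v
  · have hf : Function.Surjective
        ((quotEquivFreeC2 n).toMonoidHom.comp (QuotientGroup.mk' (A n))) :=
      (quotEquivFreeC2 n).surjective.comp (QuotientGroup.mk'_surjective _)
    by_contra hg
    refine infinite_conjugatesOf (Fin.exists_ne_ne hn) (p := toFreeC2 g) (fun h => hg ?_)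
      ((hfin.image _).subset (conjugatesOf_map_subset_image hf g))
    rwa [← quotEquivFreeC2_mk, MulEquiv.map_eq_one_iff, QuotientGroup.eq_one_iff] at h

theorem A_characteristic (hn : 3 ≤ n) : (A n).Characteristic :=
  Subgroup.characteristic_iff_le_comap.mpr fun α g hg =>
    (mem_A_iff_finite_conjugatesOf hn).mpr <|
      (((mem_A_iff_finite_conjugatesOf hn).mp hg).image α).subset
        (conjugatesOf_map_subset_image (f := α.toMonoidHom) α.surjective g)

theorem exists_conj_mk_x_of_sq_eq_one {w : Wq n} (hw : w ≠ 1) (hw2 : w ^ 2 = 1) :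
    ∃ v k, w = v * (x n k : Wq n) * v⁻¹ := by
  obtain ⟨q, k, hq⟩ := exists_conj_gen_of_sq_eq_one (p := quotEquivFreeC2 n w)
    (by rwa [Ne, MulEquiv.map_eq_one_iff]) (by rw [← map_pow, hw2, map_one])
  refine ⟨(quotEquivFreeC2 n).symm q, k, ?_⟩
  rw [← quotEquivFreeC2_symm_gen, ← map_inv, ← map_mul, ← map_mul, ← hq,
    MulEquiv.symm_apply_apply]

end FreeProduct

section Lifting

theorem mk_x_ne_one (i : Fin n) : (x n i : Wq n) ≠ 1 := fun h => by
  have := A_le_ker_unitsChar (fun _ => -1) ((QuotientGroup.eq_one_iff _).mp h)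
  simp at this

/-- If `σ` misses `k`, the character sending `x̄_k` to `-1` and the other generators to `1` is
trivial on the image of `β`, which is all of `W_n`. -/
theorem surjective_of_isConj {β : MulAut (Wq n)} {σ : Fin n → Fin n}
    (hβ : ∀ i, IsConj (β (x n i)) (x n (σ i) : Wq n)) : Function.Surjective σ := by
  intro k
  by_contra! hk
  let χ : Wq n →* ℤˣ := QuotientGroup.lift (A n) (unitsChar fun i => if i = k then -1 else 1)
    (A_le_ker_unitsChar _)
  have hχ : (χ.comp β.toMonoidHom).comp (QuotientGroup.mk' (A n)) = 1 :=
    PresentedGroup.ext fun i => by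
      change χ (β (x n i)) = 1
      rw [isConj_iff_eq.mp (χ.map_isConj (hβ i))]
      simp [χ, hk i]
  obtain ⟨g, hg⟩ := QuotientGroup.mk_surjective (β⁻¹ (x n k : Wq n))
  have := DFunLike.congr_fun hχ g
  simp [hg, χ] at this

theorem conj_x_mem_rels (g : Fin n → HW n) {σ : Fin n → Fin n} (hσ : Function.Injective σ) :
    ∀ r ∈ HWrels n, FreeGroup.lift (fun i => g i * x n (σ i) * (g i)⁻¹) r = 1 := by
  rintro _ ⟨i, j, hij, rfl⟩
  set y := fun i => g i * x n (σ i) * (g i)⁻¹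
  have hy_sq : y j ^ 2 = (x n (σ j) ^ 2) ^ (sign (σ j) (g j) : ℤ) := by
    rw [← conj_x_sq, ← conj_pow]
  have hsign : sign (σ j) (y i) = -1 := by
    simp [y, sign_x, hσ.ne hij]
  have hconj : (y i)⁻¹ * y j ^ 2 * y i = (y j ^ 2)⁻¹ := by
    have := (conj_zpow (a := (y i)⁻¹) (b := x n (σ j) ^ 2) (i := sign (σ j) (g j))).symm
    rw [inv_inv, inv_conj_x_sq, hsign, ← zpow_mul] at this
    rw [hy_sq, this, ← zpow_neg, Units.val_neg, Units.val_one, neg_one_mul]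
  simp only [map_mul, map_inv, map_pow, FreeGroup.lift_apply_of]
  rw [hconj, inv_mul_cancel]

theorem exists_lift (β : MulAut (Wq n)) :
    ∃ γ : HW n →* HW n, (QuotientGroup.mk' (A n)).comp γ =
      β.toMonoidHom.comp (QuotientGroup.mk' (A n)) ∧ A n ≤ γ.range := by
  have hconj : ∀ i, ∃ (g : HW n) (k : Fin n), β (x n i) = (g * x n k * g⁻¹ : HW n) := fun i => by
    obtain ⟨v, k, hv⟩ := exists_conj_mk_x_of_sq_eq_one (w := β (x n i))
      (by simpa using mk_x_ne_one i) (by rw [← map_pow, mk_x_sq, map_one])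
    obtain ⟨g, rfl⟩ := QuotientGroup.mk_surjective v
    exact ⟨g, k, hv⟩
  choose g σ hgσ using hconj
  have hσ : Function.Surjective σ :=
    surjective_of_isConj (β := β) fun i => isConj_iff.mpr ⟨(g i)⁻¹, by simp [hgσ, mul_assoc]⟩
  let γ := PresentedGroup.toGroup (conj_x_mem_rels g (Finite.injective_iff_surjective.mpr hσ))
  have hγ : ∀ i, γ (x n i) = g i * x n (σ i) * (g i)⁻¹ := fun i => PresentedGroup.toGroup.of _
  refine ⟨γ, PresentedGroup.ext fun i => ?_, ?_⟩
  · change ((γ (x n i) : HW n) : Wq n) = β (x n i)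
    rw [hγ, hgσ]
  · rw [A, Subgroup.closure_le]
    rintro _ ⟨k, rfl⟩
    obtain ⟨j, rfl⟩ := hσ k
    -- `γ (x_j²) = (x_{σ j}²)^{±1}` and the sign squares to one
    refine ⟨(x n j ^ 2) ^ (sign (σ j) (g j) : ℤ), ?_⟩
    rw [map_zpow, map_pow, hγ, conj_pow, conj_x_sq, ← zpow_mul, ← Units.val_mul,
      Int.units_mul_self, Units.val_one, zpow_one]

theorem bijective_of_lifts {β : MulAut (Wq n)} {γ δ : HW n →* HW n}
    (hγ : (QuotientGroup.mk' (A n)).comp γ = β.toMonoidHom.comp (QuotientGroup.mk' (A n)))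
    (hδ : (QuotientGroup.mk' (A n)).comp δ = β⁻¹.toMonoidHom.comp (QuotientGroup.mk' (A n)))
    (hA : A n ≤ γ.range) : Function.Bijective γ := by
  have hγ' (g : HW n) : (γ g : Wq n) = β g := DFunLike.congr_fun hγ g
  refine ⟨fun g g' h => ?_, fun h => ?_⟩
  · have hδγ : (QuotientGroup.mk' (A n)).comp (δ.comp γ) = QuotientGroup.mk' (A n) :=
      MonoidHom.ext fun g => by
        change ((δ (γ g) : HW n) : Wq n) = g
        rw [← QuotientGroup.mk'_apply, ← MonoidHom.comp_apply, hδ, MonoidHom.comp_apply,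
          QuotientGroup.mk'_apply, hγ', MulEquiv.coe_toMonoidHom, MulAut.inv_apply_self]
    obtain ⟨𝔞, h𝔞⟩ := exists_isTranslation_iff.mpr hδγ
    exact h𝔞.injective (congrArg δ h)
  · obtain ⟨g, hg⟩ := QuotientGroup.mk_surjective (β⁻¹ (h : Wq n))
    have hγg : (γ g : Wq n) = h := by rw [hγ', hg, MulAut.apply_inv_self]
    obtain ⟨a, ha⟩ := hA (QuotientGroup.eq.mp hγg)
    exact ⟨g * a, by rw [map_mul, ha, mul_inv_cancel_left]⟩

end Lifting

theorem mk'_comp_eq_iff (α : MulAut (HW n)) :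
    (QuotientGroup.mk' (A n)).comp α.toMonoidHom = QuotientGroup.mk' (A n) ↔
      ∃ 𝔞 : MM n, IsUnit 𝔞 ∧ IsTranslation 𝔞 α.toMonoidHom := by
  refine ⟨fun h => ?_, fun ⟨𝔞, _, h𝔞⟩ => exists_isTranslation_iff.mp ⟨𝔞, h𝔞⟩⟩
  obtain ⟨𝔞, h𝔞⟩ := exists_isTranslation_iff.mpr h
  have h' : (QuotientGroup.mk' (A n)).comp α⁻¹.toMonoidHom = QuotientGroup.mk' (A n) :=
    MonoidHom.ext fun g => by
      conv_rhs => rw [← MulAut.apply_inv_self _ α g]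
      exact (DFunLike.congr_fun h (α⁻¹ g)).symm
  obtain ⟨𝔟, h𝔟⟩ := exists_isTranslation_iff.mpr h'
  exact ⟨𝔞, h𝔞.isUnit h𝔟 (MonoidHom.ext (MulAut.apply_inv_self _ α))
    (MonoidHom.ext (MulAut.inv_apply_self _ α)), h𝔞⟩

end HW

/-- Theorem `aut-w-1`: for `n ≥ 3` there is a homomorphism
`π : Aut(G_n) → Aut(W_n)` induced by the canonical projection (it exists since `A_n`
is characteristic); it is surjective and its kernel is exactly `t(M*)`, the group of
translation automorphisms, yielding `1 → M* → Aut(G_n) → Aut(W_n) → 1`. -/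
theorem stmt9 (n : ℕ) (hn : 3 ≤ n) :
    ∃ π : MulAut (HW n) →* MulAut (Wq n),
      (∀ (α : MulAut (HW n)) (g : HW n),
        π α (QuotientGroup.mk g) = QuotientGroup.mk (α g)) ∧
      Function.Surjective π ∧
      (∀ α : MulAut (HW n),
        π α = 1 ↔ ∃ 𝔞 : MM n, IsUnit 𝔞 ∧ ∀ i, α (x n i) = x n i * aElt n 𝔞 i) := by
  have := HW.A_characteristic hn
  refine ⟨MulAut.quotient (A n), MulAut.quotient_apply_mk (A n), fun β => ?_, fun α => ?_⟩
  · obtain ⟨γ, hγ, hA⟩ := HW.exists_lift β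
    obtain ⟨δ, hδ, -⟩ := HW.exists_lift β⁻¹
    refine ⟨MulEquiv.ofBijective γ (HW.bijective_of_lifts hγ hδ hA), MulEquiv.ext fun w => ?_⟩
    induction w using QuotientGroup.induction_on with
    | H g => exact DFunLike.congr_fun hγ g
  · rw [MulAut.quotient_eq_one_iff, HW.mk'_comp_eq_iff]
    rfl
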